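/- arXiv:2005.05986 — 2 statements merged into one kernel-verified Lean document; each statement's English description precedes it below -/
import Mathlib

section
/- Let N be a positive integer and let H ∈ M_{2N}(ℂ) be Hermitian and positive definite. Then τ₃H is diagonalizable with real nonzero eigenvalues: there exist an invertible matrix P ∈ M_{2N}(ℂ) and a diagonal matrix D with real nonzero diagonal entries such that τ₃H = P D P⁻¹. -/
open Matrix
open scoped ComplexOrder

/-!
Write the positive definite `H` as `Bᴴ * B` with `B` invertible. Then
`τ₃ * H = B⁻¹ * (B * τ₃ * Bᴴ) * B` is similar to the Hermitian matrix `B * τ₃ * Bᴴ`, which the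
spectral theorem diagonalizes with real eigenvalues; these are nonzero because `B * τ₃ * Bᴴ` is
invertible.
-/

/-- `τ₃ = σ₃ ⊗ 1_N`, the 2N×2N matrix with block form [[1, 0],[0, -1]]. -/
noncomputable def tau3 (N : ℕ) : Matrix (Fin N ⊕ Fin N) (Fin N ⊕ Fin N) ℂ :=
  Matrix.fromBlocks 1 0 0 (-1)

namespace Matrix

variable {𝕜 n : Type*} [RCLike 𝕜] [Fintype n] [DecidableEq n]

theorem PosDef.exists_isUnit_eq_conjTranspose_mul {H : Matrix n n 𝕜} (hH : H.PosDef) :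
    ∃ B : Matrix n n 𝕜, IsUnit B ∧ H = Bᴴ * B := by
  open scoped MatrixOrder in
  exact CStarAlgebra.isStrictlyPositive_iff_eq_star_mul_self.mp hH.isStrictlyPositive

theorem IsHermitian.eigenvalues_ne_zero_of_isUnit {M : Matrix n n 𝕜} (hM : M.IsHermitian)
    (hM₀ : IsUnit M) (i : n) : hM.eigenvalues i ≠ 0 := by
  intro hi
  refine ((isUnit_iff_isUnit_det M).mp hM₀).ne_zero ?_
  rw [hM.det_eq_prod_eigenvalues]
  exact Finset.prod_eq_zero (Finset.mem_univ i) (by simp [hi])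

theorem IsHermitian.eq_mul_diagonal_eigenvalues_mul_inv {M : Matrix n n 𝕜} (hM : M.IsHermitian) :
    ∃ P : Matrix n n 𝕜, IsUnit P ∧
      M = P * diagonal (fun i => (hM.eigenvalues i : 𝕜)) * P⁻¹ := by
  let U := hM.eigenvectorUnitary
  refine ⟨U, IsUnit.of_mul_eq_one _ (Unitary.coe_mul_star_self U), ?_⟩
  rw [inv_eq_left_inv (Unitary.coe_star_mul_self U)]
  exact hM.spectral_theorem

theorem IsHermitian.exists_diagonalization_of_isUnit {M : Matrix n n 𝕜} (hM : M.IsHermitian)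
    (hM₀ : IsUnit M) :
    ∃ (P : Matrix n n 𝕜) (d : n → ℝ), IsUnit P ∧ (∀ i, d i ≠ 0) ∧
      M = P * diagonal (fun i => (d i : 𝕜)) * P⁻¹ :=
  let ⟨P, hP, hMP⟩ := hM.eq_mul_diagonal_eigenvalues_mul_inv
  ⟨P, hM.eigenvalues, hP, hM.eigenvalues_ne_zero_of_isUnit hM₀, hMP⟩

theorem inv_mul_mul_eq_mul_mul_inv {B P D : Matrix n n 𝕜} (hB : IsUnit B) :
    B⁻¹ * (P * D * P⁻¹) * B = B⁻¹ * P * D * (B⁻¹ * P)⁻¹ := by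
  rw [mul_inv_rev, nonsing_inv_nonsing_inv B ((isUnit_iff_isUnit_det B).mp hB)]
  simp only [mul_assoc]

theorem IsHermitian.exists_diagonalization_mul_posDef {A H : Matrix n n 𝕜} (hA : A.IsHermitian)
    (hA₀ : IsUnit A) (hH : H.PosDef) :
    ∃ (P : Matrix n n 𝕜) (d : n → ℝ), IsUnit P ∧ (∀ i, d i ≠ 0) ∧
      A * H = P * diagonal (fun i => (d i : 𝕜)) * P⁻¹ := by
  obtain ⟨B, hB, rfl⟩ := hH.exists_isUnit_eq_conjTranspose_mul
  have hM : (B * A * Bᴴ).IsHermitian := isHermitian_mul_mul_conjTranspose B hA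
  have hM₀ : IsUnit (B * A * Bᴴ) := (hB.mul hA₀).mul ((isUnit_conjTranspose B).mpr hB)
  obtain ⟨Q, d, hQ, hd, hMQ⟩ := hM.exists_diagonalization_of_isUnit hM₀
  refine ⟨B⁻¹ * Q, d, (isUnit_nonsing_inv_iff.mpr hB).mul hQ, hd, ?_⟩
  calc A * (Bᴴ * B) = B⁻¹ * (B * A * Bᴴ) * B := by
        simp only [mul_assoc, nonsing_inv_mul_cancel_left _ _ ((isUnit_iff_isUnit_det B).mp hB)]
    _ = B⁻¹ * Q * diagonal (fun i => (d i : 𝕜)) * (B⁻¹ * Q)⁻¹ := by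
        rw [hMQ, inv_mul_mul_eq_mul_mul_inv hB]

end Matrix

theorem tau3_mul_self (N : ℕ) : tau3 N * tau3 N = 1 := by
  simp [tau3, fromBlocks_multiply, ← fromBlocks_one]

theorem isHermitian_tau3 (N : ℕ) : (tau3 N).IsHermitian := by
  simp [tau3, IsHermitian, fromBlocks_conjTranspose]

theorem gapped_boson_BdG_diagonalizable_general (N : ℕ)
    (H : Matrix (Fin N ⊕ Fin N) (Fin N ⊕ Fin N) ℂ)
    (hpos : H.PosDef) :
    ∃ (P D : Matrix (Fin N ⊕ Fin N) (Fin N ⊕ Fin N) ℂ),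
      IsUnit P ∧
      (∃ d : Fin N ⊕ Fin N → ℝ, (∀ i, d i ≠ 0) ∧
        D = Matrix.diagonal (fun i => (d i : ℂ))) ∧
      tau3 N * H = P * D * P⁻¹ := by
  obtain ⟨P, d, hP, hd, hPD⟩ := (isHermitian_tau3 N).exists_diagonalization_mul_posDef
    (IsUnit.of_mul_eq_one _ (tau3_mul_self N)) hpos
  exact ⟨P, _, hP, ⟨d, hd, rfl⟩, hPD⟩

/-- The effective BdG Hamiltonian `τ₃H` of a gapped stable free-boson system
(`H` Hermitian positive definite) is diagonalizable with real nonzero eigenvalues. -/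
theorem gapped_boson_BdG_diagonalizable (N : ℕ) (hN : 0 < N)
    (H : Matrix (Fin N ⊕ Fin N) (Fin N ⊕ Fin N) ℂ)
    (hpos : H.PosDef) :
    ∃ (P D : Matrix (Fin N ⊕ Fin N) (Fin N ⊕ Fin N) ℂ),
      IsUnit P ∧
      (∃ d : Fin N ⊕ Fin N → ℝ, (∀ i, d i ≠ 0) ∧
        D = Matrix.diagonal (fun i => (d i : ℂ))) ∧
      tau3 N * H = P * D * P⁻¹ :=
  gapped_boson_BdG_diagonalizable_general N H hpos
end

section
/- Let N be a positive integer, let H ∈ M_{2N}(ℂ) be Hermitian and positive definite, and let U ∈ M_{2N}(ℂ) be unitary. Then: (i) if U anticommutes with τ₃ (Uτ₃ = −τ₃U), then Uᴴ (τ₃H)* U ≠ τ₃H, so a time-reversal symmetry of the effective BdG Hamiltonian of a stable gapped free-boson system cannot anticommute with τ₃; (ii) if U commutes with τ₃ (Uτ₃ = τ₃U), then Uᴴ (τ₃H)* U ≠ −τ₃H, so a particle-hole symmetry cannot commute with τ₃; and (iii) if U commutes with τ₃, then Uᴴ (τ₃H) U ≠ −τ₃H, so a chiral symmetry cannot commute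 with τ₃. -/
open Matrix
open scoped ComplexOrder

/-! Each of the three symmetry conditions, combined with the assumed (anti)commutation of `U`
with `τ₃`, cancels down to `Uᴴ H' U = -H` with `H' = H` or `H' = H* = Hᵀ`. The left side is
positive definite because `H'` is and `U` is invertible, the right side is negative definite;
comparing traces gives the contradiction. -/

namespace Matrix

variable {n R : Type*}

section Conjugation

variable [Fintype n] [Ring R] [StarRing R] {S U : Matrix n n R}

theorem conjTranspose_mul_mul_of_commute (hS : Sᴴ = S) (hUS : U * S = S * U)
    (X : Matrix n n R) : Uᴴ * (S * X) * U = S * (Uᴴ * X * U) := by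
  have hUS' : Uᴴ * S = S * Uᴴ := by
    simpa [conjTranspose_mul, hS] using congrArg conjTranspose hUS.symm
  simp only [← Matrix.mul_assoc, hUS']

theorem conjTranspose_mul_mul_of_anticommute (hS : Sᴴ = S) (hUS : U * S = -(S * U))
    (X : Matrix n n R) : Uᴴ * (S * X) * U = -(S * (Uᴴ * X * U)) := by
  have hUS' : Uᴴ * S = -(S * Uᴴ) := by
    refine neg_eq_iff_eq_neg.mp (Eq.symm ?_)
    simpa [conjTranspose_mul, hS] using congrArg conjTranspose hUS
  simp only [← Matrix.mul_assoc, hUS', Matrix.neg_mul]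

end Conjugation

theorem IsHermitian.map_star {R : Type*} [Star R] {H : Matrix n n R} (hH : H.IsHermitian) :
    H.map star = Hᵀ := by
  conv_rhs => rw [← hH.eq]
  rfl

theorem PosDef.conjTranspose_mul_mul_ne_neg [Fintype n] [Ring R] [PartialOrder R] [StarRing R]
    [Nontrivial R] [IsOrderedCancelAddMonoid R] [Nonempty n] {A B U : Matrix n n R}
    (hA : A.PosDef) (hB : B.PosDef) (hU : Function.Injective U.mulVec) :
    Uᴴ * A * U ≠ -B := by
  intro h
  have htrace := (hA.conjTranspose_mul_mul_same hU).trace_pos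
  rw [h, trace_neg, neg_pos] at htrace
  exact htrace.not_gt hB.trace_pos

end Matrix

theorem tau3_conjTranspose (N : ℕ) : (tau3 N)ᴴ = tau3 N := by
  simp [tau3, fromBlocks_conjTranspose]

theorem tau3_map_conj (N : ℕ) : (tau3 N).map (starRingEnd ℂ) = tau3 N := by
  simp [tau3, fromBlocks_map, Matrix.map_neg]

theorem isUnit_tau3 (N : ℕ) : IsUnit (tau3 N) :=
  ⟨⟨_, _, tau3_mul_self N, tau3_mul_self N⟩, rfl⟩

theorem stable_boson_symmetry_constraints_general (N : ℕ) (hN : 0 < N)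
    (H : Matrix (Fin N ⊕ Fin N) (Fin N ⊕ Fin N) ℂ)
    (hpos : H.PosDef)
    (U : Matrix (Fin N ⊕ Fin N) (Fin N ⊕ Fin N) ℂ)
    (hU : U ∈ Matrix.unitaryGroup (Fin N ⊕ Fin N) ℂ) :
    (U * tau3 N = -(tau3 N * U) →
      Uᴴ * (tau3 N * H).map (starRingEnd ℂ) * U ≠ tau3 N * H) ∧
    (U * tau3 N = tau3 N * U →
      Uᴴ * (tau3 N * H).map (starRingEnd ℂ) * U ≠ -(tau3 N * H)) ∧
    (U * tau3 N = tau3 N * U →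
      Uᴴ * (tau3 N * H) * U ≠ -(tau3 N * H)) := by
  have : Nonempty (Fin N ⊕ Fin N) := ⟨.inl ⟨0, hN⟩⟩
  have hUinj : Function.Injective U.mulVec :=
    mulVec_injective_of_isUnit (Unitary.isUnit_coe (U := ⟨U, hU⟩))
  have hconj : (tau3 N * H).map (starRingEnd ℂ) = tau3 N * Hᵀ := by
    rw [Matrix.map_mul, tau3_map_conj, ← hpos.isHermitian.map_star]
    rfl
  have hτ := tau3_conjTranspose N
  refine ⟨fun hanti h => ?_, fun hcomm h => ?_, fun hcomm h => ?_⟩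
  · rw [hconj, conjTranspose_mul_mul_of_anticommute hτ hanti, ← Matrix.mul_neg] at h
    exact hpos.transpose.conjTranspose_mul_mul_ne_neg hpos hUinj
      (neg_eq_iff_eq_neg.mp ((isUnit_tau3 N).mul_left_cancel h))
  · rw [hconj, conjTranspose_mul_mul_of_commute hτ hcomm, ← Matrix.mul_neg] at h
    exact hpos.transpose.conjTranspose_mul_mul_ne_neg hpos hUinj ((isUnit_tau3 N).mul_left_cancel h)
  · rw [conjTranspose_mul_mul_of_commute hτ hcomm, ← Matrix.mul_neg] at h
    exact hpos.conjTranspose_mul_mul_ne_neg hpos hUinj ((isUnit_tau3 N).mul_left_cancel h)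

/-- Threefold-way constraints for stable gapped free bosons: for `H` Hermitian
positive definite and `U` unitary, (i) a time-reversal symmetry of `τ₃H` cannot
anticommute with `τ₃`, (ii) a particle-hole symmetry cannot commute with `τ₃`,
and (iii) a chiral symmetry cannot commute with `τ₃`. -/
theorem stable_boson_symmetry_constraints (N : ℕ) (hN : 0 < N)
    (H : Matrix (Fin N ⊕ Fin N) (Fin N ⊕ Fin N) ℂ)
    (hherm : H.IsHermitian) (hpos : H.PosDef)
    (U : Matrix (Fin N ⊕ Fin N) (Fin N ⊕ Fin N) ℂ)
    (hU : U ∈ Matrix.unitaryGroup (Fin N ⊕ Fin N) ℂ) :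
    (U * tau3 N = -(tau3 N * U) →
      Uᴴ * (tau3 N * H).map (starRingEnd ℂ) * U ≠ tau3 N * H) ∧
    (U * tau3 N = tau3 N * U →
      Uᴴ * (tau3 N * H).map (starRingEnd ℂ) * U ≠ -(tau3 N * H)) ∧
    (U * tau3 N = tau3 N * U →
      Uᴴ * (tau3 N * H) * U ≠ -(tau3 N * H)) :=
  stable_boson_symmetry_constraints_general N hN H hpos U hU
end
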